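/- Let a group G be hyperbolic relative to peripheral subgroups, and suppose: (a) any two distinct peripheral conjugates intersect finitely; (b) every hyperbolic (non-parabolic) element of infinite order lies in a unique maximal infinite virtually cyclic subgroup; (c) peripheral subgroups and maximal infinite virtually cyclic subgroups of hyperbolic type are self-normalizing; (d) no element is simultaneously of hyperbolic and parabolic type. Then the collection consisting of all peripheral conjugates together with all maximal infinite virtually cyclic subgroups not conjugate into a peripheral subgroup is an adapted family for the pair (FIN, VC) of families of finite and virtually cyclic subgroups of G. -/

import Mathlib

variable {G : Type*} [Group G]

/-- The conjugate subgroup `g A g⁻¹`. -/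
def conjSub (g : G) (A : Subgroup G) : Subgroup G :=
  A.map (MulAut.conj g).toMonoidHom

/-- A group is virtually cyclic if it has a cyclic subgroup of finite index. -/
def IsVirtuallyCyclic (H : Type*) [Group H] : Prop :=
  ∃ C : Subgroup H, IsCyclic C ∧ C.FiniteIndex

/-- A maximal infinite virtually cyclic subgroup. -/
def IsMaxInfVC (V : Subgroup G) : Prop :=
  Infinite V ∧ IsVirtuallyCyclic V ∧
    ∀ W : Subgroup G, Infinite W → IsVirtuallyCyclic W → V ≤ W → V = W

/-- All conjugates of the peripheral subgroups. -/
def PeriConj (Peri : Set (Subgroup G)) : Set (Subgroup G) :=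
  {K | ∃ H ∈ Peri, ∃ g : G, K = conjSub g H}

/-- Maximal infinite virtually cyclic subgroups of hyperbolic type, i.e. not contained in
any conjugate of a peripheral subgroup. -/
def HypType (Peri : Set (Subgroup G)) (V : Subgroup G) : Prop :=
  IsMaxInfVC V ∧ ∀ K ∈ PeriConj Peri, ¬ V ≤ K

/-- The family of finite subgroups of `G`. -/
def FINfam : Set (Subgroup G) := {H | (H : Set G).Finite}

/-- The family of virtually cyclic subgroups of `G`. -/
def VCfam : Set (Subgroup G) := {H | IsVirtuallyCyclic H}

/-- A collection `𝒞` of subgroups is adapted to the pair of families `(F, F̃)`: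
(1) two distinct members intersect in a member of `F`; (2) `𝒞` is conjugacy closed;
(3) every member is self-normalizing; (4) every member of `F̃ \ F` is contained in a
member of `𝒞`. -/
def IsAdapted (F Ftil 𝒞 : Set (Subgroup G)) : Prop :=
  (∀ A ∈ 𝒞, ∀ B ∈ 𝒞, A = B ∨ A ⊓ B ∈ F) ∧
  (∀ A ∈ 𝒞, ∀ g : G, conjSub g A ∈ 𝒞) ∧
  (∀ A ∈ 𝒞, Subgroup.normalizer A = A) ∧
  (∀ V ∈ Ftil, V ∉ F → ∃ A ∈ 𝒞, V ≤ A)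


section AuxLemmas

lemma aux_mem_conjSub {g x : G} {A : Subgroup G} : x ∈ conjSub g A ↔ g⁻¹ * x * g ∈ A := by
  rw [conjSub, Subgroup.mem_map_equiv, MulAut.conj_symm_apply]

lemma aux_conjSub_conjSub (g h : G) (A : Subgroup G) :
    conjSub g (conjSub h A) = conjSub (g * h) A := by
  ext x
  simp only [aux_mem_conjSub, mul_inv_rev]
  constructor <;> intro hx
  · have e : h⁻¹ * g⁻¹ * x * (g * h) = h⁻¹ * (g⁻¹ * x * g) * h := by group
    rwa [e]
  · have e : h⁻¹ * (g⁻¹ * x * g) * h = h⁻¹ * g⁻¹ * x * (g * h) := by group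
    rwa [e]

lemma aux_conjSub_one (A : Subgroup G) : conjSub 1 A = A := by
  ext x; simp [aux_mem_conjSub]

lemma aux_conjSub_le_iff {g : G} {A K : Subgroup G} : conjSub g A ≤ K ↔ A ≤ conjSub g⁻¹ K := by
  constructor
  · intro h x hx
    rw [aux_mem_conjSub, inv_inv]
    refine h (aux_mem_conjSub.mpr ?_)
    have e : g⁻¹ * (g * x * g⁻¹) * g = x := by group
    rwa [e]
  · intro h x hx
    rw [aux_mem_conjSub] at hx
    have hx2 := h hx
    rw [aux_mem_conjSub, inv_inv] at hx2
    have e : g * (g⁻¹ * x * g) * g⁻¹ = x := by group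
    rwa [e] at hx2

/-- The conjugation isomorphism onto a conjugate subgroup. -/
noncomputable def auxConjEquiv (g : G) (A : Subgroup G) : A ≃* conjSub g A :=
  A.equivMapOfInjective (MulAut.conj g).toMonoidHom (MulAut.conj g).injective

lemma aux_infinite_conjSub (g : G) (A : Subgroup G) [Infinite A] : Infinite (conjSub g A) :=
  Infinite.of_injective (auxConjEquiv g A) (auxConjEquiv g A).injective

lemma aux_vc_of_mulEquiv {H H' : Type*} [Group H] [Group H'] (e : H ≃* H')
    (h : IsVirtuallyCyclic H) : IsVirtuallyCyclic H' := by
  obtain ⟨C, hCc, hCf⟩ := h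
  refine ⟨C.map e.toMonoidHom, ?_, ?_⟩
  · have e' := C.equivMapOfInjective e.toMonoidHom e.injective
    exact isCyclic_of_surjective e' e'.surjective
  · constructor
    have hker : e.toMonoidHom.ker = ⊥ := e.toMonoidHom.ker_eq_bot_iff.mpr e.injective
    rw [Subgroup.index_map_eq C e.surjective (by rw [hker]; exact bot_le)]
    exact hCf.index_ne_zero

lemma aux_maxInfVC_conj {V : Subgroup G} (hV : IsMaxInfVC V) (g : G) :
    IsMaxInfVC (conjSub g V) := by
  obtain ⟨hInf, hVC, hmax⟩ := hV
  haveI := hInf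
  refine ⟨aux_infinite_conjSub g V, aux_vc_of_mulEquiv (auxConjEquiv g V) hVC, ?_⟩
  intro W hWi hWvc hle
  haveI := hWi
  have h1 : V ≤ conjSub g⁻¹ W := aux_conjSub_le_iff.mp hle
  have h2 : V = conjSub g⁻¹ W :=
    hmax _ (aux_infinite_conjSub g⁻¹ W) (aux_vc_of_mulEquiv (auxConjEquiv g⁻¹ W) hWvc) h1
  rw [h2, aux_conjSub_conjSub, mul_inv_cancel, aux_conjSub_one]

lemma aux_periConj_conj {Peri : Set (Subgroup G)} {K : Subgroup G} (g : G)
    (hK : K ∈ PeriConj Peri) : conjSub g K ∈ PeriConj Peri := by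
  obtain ⟨H, hH, h, rfl⟩ := hK
  exact ⟨H, hH, g * h, by rw [aux_conjSub_conjSub]⟩

lemma aux_hypType_conj {Peri : Set (Subgroup G)} {V : Subgroup G} (g : G)
    (hV : HypType Peri V) : HypType Peri (conjSub g V) := by
  refine ⟨aux_maxInfVC_conj hV.1 g, ?_⟩
  intro K hK hle
  exact hV.2 _ (aux_periConj_conj g⁻¹ hK) (aux_conjSub_le_iff.mp hle)

lemma aux_not_finOrder_zpow {g : G} (hg : ¬ IsOfFinOrder g) {k : ℤ} (hk : k ≠ 0) :
    ¬ IsOfFinOrder (g ^ k) := by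
  intro h
  obtain ⟨n, hn, he⟩ := isOfFinOrder_iff_pow_eq_one.mp h
  have hinj := injective_zpow_iff_not_isOfFinOrder.mpr hg
  have h1 : g ^ (k * n) = g ^ (0 : ℤ) := by
    rw [zpow_zero, zpow_mul, zpow_natCast, he]
  have h2 : k * (n : ℤ) = 0 := hinj h1
  rcases mul_eq_zero.mp h2 with h3 | h3
  · exact hk h3
  · omega

lemma aux_finOrder_coe {G : Type*} [Group G] {H : Subgroup G} (x : H) :
    IsOfFinOrder (x : G) ↔ IsOfFinOrder x := by
  rw [← orderOf_pos_iff, ← orderOf_pos_iff, Subgroup.orderOf_coe]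

lemma aux_infinite_of_finiteIndex {G : Type*} [Group G] [Infinite G] (H : Subgroup G)
    (hfi : H.FiniteIndex) : Infinite H := by
  by_contra h
  have h1 : H.index * Nat.card H = 0 := by
    rw [H.index_mul_card]; exact Nat.card_eq_zero_of_infinite
  rcases Nat.mul_eq_zero.mp h1 with h2 | h2
  · exact hfi.index_ne_zero h2
  · rw [Nat.card_eq_zero] at h2
    rcases h2 with h2 | h2
    · exact h2.false ⟨1, H.one_mem⟩
    · exact h h2

lemma aux_gen_not_finOrder {H : Type*} [Group H] [Infinite H] {c : H}
    (hc : ∀ x, x ∈ Subgroup.zpowers c) : ¬ IsOfFinOrder c := by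
  intro h
  have hfin : (Set.univ : Set H).Finite := h.finite_zpowers.subset (fun x _ => hc x)
  exact Set.infinite_univ hfin

lemma aux_infinite_of_mem {A : Subgroup G} {x : G} (hx : x ∈ A) (ho : ¬ IsOfFinOrder x) :
    (A : Set G).Infinite := by
  have hinj : Function.Injective (fun n : ℤ => x ^ n) :=
    injective_zpow_iff_not_isOfFinOrder.mpr ho
  exact Set.infinite_of_injective_forall_mem hinj (fun n => A.zpow_mem hx n)

lemma aux_torsion_finite {V S : Subgroup G} (hVC : IsVirtuallyCyclic V) (hle : S ≤ V)
    (htor : ∀ x ∈ S, IsOfFinOrder x) : (S : Set G).Finite := by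
  by_contra hfin
  have hSinf : (S : Set G).Infinite := hfin
  haveI hVinf : Infinite V := Set.infinite_coe_iff.mpr (hSinf.mono hle)
  obtain ⟨C, hCc, hCf⟩ := hVC
  haveI hCinf : Infinite C := aux_infinite_of_finiteIndex C hCf
  obtain ⟨c, hc⟩ := hCc.exists_generator
  have hcord : ¬ IsOfFinOrder c := aux_gen_not_finOrder hc
  have hcordV : ¬ IsOfFinOrder (c : V) := fun h => hcord ((aux_finOrder_coe c).mp h)
  set S' := S.subgroupOf V with hS'def
  haveI hS'inf : Infinite S' := by
    haveI : Infinite S := Set.infinite_coe_iff.mpr hSinf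
    exact Infinite.of_injective (Subgroup.subgroupOfEquivOfLe hle).symm
      (Subgroup.subgroupOfEquivOfLe hle).symm.injective
  have hbot : C.subgroupOf S' = ⊥ := by
    rw [eq_bot_iff]
    intro x hx
    rw [Subgroup.mem_subgroupOf] at hx
    obtain ⟨k, hk⟩ := Subgroup.mem_zpowers_iff.mp (hc ⟨(x : V), hx⟩)
    have hkV : (c : V) ^ k = (x : V) := by
      have := congrArg (fun y : C => (y : V)) hk
      simpa [SubgroupClass.coe_zpow] using this
    have hxtor : IsOfFinOrder (x : V) := by
      have hmem : ((x : V) : G) ∈ S := by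
        have h2 : (x : V) ∈ S.subgroupOf V := x.2
        rwa [Subgroup.mem_subgroupOf] at h2
      exact (aux_finOrder_coe (x : V)).mp (htor _ hmem)
    have hk0 : k = 0 := by
      by_contra hk0
      exact (aux_not_finOrder_zpow hcordV hk0) (hkV ▸ hxtor)
    have hx1 : (x : V) = 1 := by rw [← hkV, hk0, zpow_zero]
    exact Subgroup.mem_bot.mpr (Subtype.ext hx1)
  have hrel : C.relIndex S' ≠ 0 :=
    fun h => hCf.index_ne_zero (Subgroup.index_eq_zero_of_relIndex_eq_zero h)
  apply hrel
  have : C.relIndex S' = (C.subgroupOf S').index := rfl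
  rw [this, hbot, Subgroup.index_bot]
  exact Nat.card_eq_zero_of_infinite

lemma aux_vc_exists_gen {V : Subgroup G} (hVC : IsVirtuallyCyclic V) (hinf : Infinite V) :
    ∃ g : G, g ∈ V ∧ ¬ IsOfFinOrder g ∧
      ∀ v ∈ V, ∃ n : ℕ, 0 < n ∧ ∃ k : ℤ, v ^ n = g ^ k := by
  obtain ⟨C, hCc, hCf⟩ := hVC
  haveI := hinf
  haveI hCinf : Infinite C := aux_infinite_of_finiteIndex C hCf
  obtain ⟨c, hc⟩ := hCc.exists_generator
  have hcord : ¬ IsOfFinOrder c := aux_gen_not_finOrder hc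
  refine ⟨((c : V) : G), ((c : V)).2, ?_, ?_⟩
  · intro h
    exact hcord ((aux_finOrder_coe c).mp ((aux_finOrder_coe (c : V)).mp h))
  · intro v hv
    obtain ⟨n, hn, -, hmem⟩ := Subgroup.exists_pow_mem_of_index_ne_zero hCf.index_ne_zero ⟨v, hv⟩
    obtain ⟨k, hk⟩ := Subgroup.mem_zpowers_iff.mp (hc ⟨(⟨v, hv⟩ : V) ^ n, hmem⟩)
    refine ⟨n, hn, k, ?_⟩
    have h1 := congrArg (fun y : C => ((y : V) : G)) hk
    simpa [SubgroupClass.coe_zpow, SubmonoidClass.coe_pow] using h1.symm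

lemma aux_mem_normalizer_of_conjSub_eq {v : G} {K : Subgroup G} (h : conjSub v K = K) :
    v ∈ Subgroup.normalizer (K : Set G) := by
  rw [Subgroup.mem_normalizer_iff]
  intro x
  constructor
  · intro hx
    rw [← h]
    refine aux_mem_conjSub.mpr ?_
    have e : v⁻¹ * (v * x * v⁻¹) * v = x := by group
    rwa [e]
  · intro hx
    rw [← h] at hx
    have h2 := aux_mem_conjSub.mp hx
    have e : v⁻¹ * (v * x * v⁻¹) * v = x := by group
    rwa [e] at h2

lemma aux_conj_not_finOrder {v g : G} (hg : ¬ IsOfFinOrder g) :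
    ¬ IsOfFinOrder (v * g * v⁻¹) := by
  intro hf
  obtain ⟨m, hm, he⟩ := isOfFinOrder_iff_pow_eq_one.mp hf
  apply hg
  refine isOfFinOrder_iff_pow_eq_one.mpr ⟨m, hm, ?_⟩
  rw [conj_pow] at he
  have h2 := congrArg (fun y => v⁻¹ * y * v) he
  simpa [mul_assoc] using h2

end AuxLemmas

/-- for a group `G` hyperbolic relative to peripheral subgroups `Peri`,
assuming (a) distinct peripheral conjugates intersect finitely, (b) every infinite-order
element not lying in any peripheral conjugate (i.e. every hyperbolic element of infinite
order) lies in a unique maximal infinite virtually cyclic subgroup, (c) peripheral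
conjugates and maximal infinite virtually cyclic subgroups of hyperbolic type are
self-normalizing, and (d) no element of infinite order is simultaneously of hyperbolic
type (lying in a hyperbolic-type subgroup) and of parabolic type (lying in a peripheral
conjugate), the collection of all peripheral conjugates together with all maximal
infinite virtually cyclic subgroups of hyperbolic type is adapted to `(FIN, VC)`. -/
theorem relatively_hyperbolic_adapted_family (Peri : Set (Subgroup G))
    (ha : ∀ K ∈ PeriConj Peri, ∀ L ∈ PeriConj Peri, K ≠ L →
      ((K ⊓ L : Subgroup G) : Set G).Finite)
    (hb : ∀ g : G, ¬ IsOfFinOrder g → (∀ K ∈ PeriConj Peri, g ∉ K) →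
      ∃! V : Subgroup G, IsMaxInfVC V ∧ g ∈ V)
    (hc1 : ∀ K ∈ PeriConj Peri, Subgroup.normalizer K = K)
    (hc2 : ∀ V : Subgroup G, HypType Peri V → Subgroup.normalizer V = V)
    (hd : ∀ V : Subgroup G, HypType Peri V → ∀ K ∈ PeriConj Peri,
      ∀ g : G, g ∈ V → g ∈ K → IsOfFinOrder g) :
    IsAdapted FINfam VCfam (PeriConj Peri ∪ {V | HypType Peri V}) := by
  refine ⟨?_, ?_, ?_, ?_⟩
  · -- (1) pairwise intersections
    rintro A (hA | hA) B (hB | hB)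
    · by_cases h : A = B
      · exact Or.inl h
      · exact Or.inr (ha A hA B hB h)
    · refine Or.inr (aux_torsion_finite (V := B) hB.1.2.1 inf_le_right ?_)
      intro x hx
      rw [Subgroup.mem_inf] at hx
      exact hd B hB A hA x hx.2 hx.1
    · refine Or.inr (aux_torsion_finite (V := A) hA.1.2.1 inf_le_left ?_)
      intro x hx
      rw [Subgroup.mem_inf] at hx
      exact hd A hA B hB x hx.1 hx.2
    · by_cases h : A = B
      · exact Or.inl h
      · right
        by_contra hfin
        have hnt : ¬ ∀ x ∈ A ⊓ B, IsOfFinOrder x :=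
          fun htor => hfin (aux_torsion_finite (V := A) hA.1.2.1 inf_le_left htor)
        push_neg at hnt
        obtain ⟨x, hxmem, hxord⟩ := hnt
        rw [Subgroup.mem_inf] at hxmem
        have hxper : ∀ K ∈ PeriConj Peri, x ∉ K :=
          fun K hK hxK => hxord (hd A hA K hK x hxmem.1 hxK)
        obtain ⟨W, -, hun⟩ := hb x hxord hxper
        exact h ((hun A ⟨hA.1, hxmem.1⟩).trans (hun B ⟨hB.1, hxmem.2⟩).symm)
  · -- (2) conjugacy closure
    rintro A (hA | hA) g
    · exact Or.inl (aux_periConj_conj g hA)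
    · exact Or.inr (aux_hypType_conj g hA)
  · -- (3) self-normalizing
    rintro A (hA | hA)
    · exact hc1 A hA
    · exact hc2 A hA
  · -- (4) covering
    intro V hVC hVfin
    haveI hVinf : Infinite V := Set.infinite_coe_iff.mpr hVfin
    obtain ⟨g, hgV, hgord, hgpow⟩ := aux_vc_exists_gen hVC hVinf
    by_cases hper : ∃ K ∈ PeriConj Peri, g ∈ K
    · obtain ⟨K, hK, hgK⟩ := hper
      refine ⟨K, Or.inl hK, ?_⟩
      intro v hv
      rw [← hc1 K hK]
      obtain ⟨n, hn, k, hnk⟩ :=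
        hgpow (v * g * v⁻¹) (V.mul_mem (V.mul_mem hv hgV) (V.inv_mem hv))
      have hw : ¬ IsOfFinOrder (v * g * v⁻¹) := aux_conj_not_finOrder hgord
      have hk0 : k ≠ 0 := by
        intro h0
        rw [h0, zpow_zero] at hnk
        exact hw (isOfFinOrder_iff_pow_eq_one.mpr ⟨n, hn, hnk⟩)
      have hgk_ord : ¬ IsOfFinOrder (g ^ k) := aux_not_finOrder_zpow hgord hk0
      have hgkK : g ^ k ∈ K := K.zpow_mem hgK k
      have hwK : v * g * v⁻¹ ∈ conjSub v K := by
        refine aux_mem_conjSub.mpr ?_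
        have e : v⁻¹ * (v * g * v⁻¹) * v = g := by group
        rwa [e]
      have hgkKv : g ^ k ∈ conjSub v K := by
        rw [← hnk]; exact pow_mem hwK n
      have heq : conjSub v K = K := by
        by_contra hne
        exact aux_infinite_of_mem (Subgroup.mem_inf.mpr ⟨hgkKv, hgkK⟩) hgk_ord
          (ha _ (aux_periConj_conj v hK) K hK hne)
      exact aux_mem_normalizer_of_conjSub_eq heq
    · push_neg at hper
      obtain ⟨W, ⟨hWmax, hgW⟩, -⟩ := hb g hgord hper
      have hWhyp : HypType Peri W := ⟨hWmax, fun K hK hle => hper K hK (hle hgW)⟩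
      refine ⟨W, Or.inr hWhyp, ?_⟩
      intro v hv
      rw [← hc2 W hWhyp]
      obtain ⟨n, hn, k, hnk⟩ :=
        hgpow (v * g * v⁻¹) (V.mul_mem (V.mul_mem hv hgV) (V.inv_mem hv))
      have hw : ¬ IsOfFinOrder (v * g * v⁻¹) := aux_conj_not_finOrder hgord
      have hk0 : k ≠ 0 := by
        intro h0
        rw [h0, zpow_zero] at hnk
        exact hw (isOfFinOrder_iff_pow_eq_one.mpr ⟨n, hn, hnk⟩)
      have hgk_ord : ¬ IsOfFinOrder (g ^ k) := aux_not_finOrder_zpow hgord hk0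
      have hgkW : g ^ k ∈ W := W.zpow_mem hgW k
      have hwW : v * g * v⁻¹ ∈ conjSub v W := by
        refine aux_mem_conjSub.mpr ?_
        have e : v⁻¹ * (v * g * v⁻¹) * v = g := by group
        rwa [e]
      have hgkWv : g ^ k ∈ conjSub v W := by
        rw [← hnk]; exact pow_mem hwW n
      have hgkper : ∀ K ∈ PeriConj Peri, g ^ k ∉ K :=
        fun K hK hmem => hgk_ord (hd W hWhyp K hK _ hgkW hmem)
      obtain ⟨W', -, hun'⟩ := hb (g ^ k) hgk_ord hgkper
      have h1 : conjSub v W = W' := hun' _ ⟨aux_maxInfVC_conj hWmax v, hgkWv⟩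
      have h2 : W = W' := hun' W ⟨hWmax, hgkW⟩
      exact aux_mem_normalizer_of_conjSub_eq (h1.trans h2.symm)
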